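/- arXiv:math/0511012 — 5 statements merged into one kernel-verified Lean document; each statement's English description precedes it below -/
import Mathlib

section
/- Let k ≥ 1 be an integer and φ(z) = z^{2k} + a_1 z^{k-1} + ... + a_k a polynomial with a_k ≠ 0. On the curve w^2 = z φ(z), define G = w and G_* = h/w where h(z) = (2k z φ(z) - z^2 φ'(z))/(2k+1). Then G - G_* = z(φ(z) + z φ'(z))/((2k+1) w), and consequently dG/(G - G_*) = (2k+1) dz/(2z) (using 2w dw = (z φ)' dz). -/
/-- On the curve `w² = z φ(z)`, with `φ(z) = z^{2k} + a₁ z^{k-1} + ⋯ + a_k` (`a_k ≠ 0`),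
`G = w`, `G_* = h/w`, `h = (2k z φ - z² φ')/(2k+1)`, one has
`G - G_* = z(φ + zφ')/((2k+1)w)`; consequently, using `2w dw = (zφ)' dz`,
`dG/(G - G_*) = (2k+1) dz/(2z)`. -/
theorem stmt_11 (k : ℕ) (hk : 1 ≤ k) (a : ℕ → ℂ) (hak : a k ≠ 0)
    (φ φ' : ℂ → ℂ)
    (hφ : ∀ z : ℂ, φ z = z ^ (2 * k) + ∑ i ∈ Finset.range k, a (i + 1) * z ^ (k - 1 - i))
    (hd : ∀ z : ℂ, HasDerivAt φ (φ' z) z)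
    (z w dz dw : ℂ) (hw : w ^ 2 = z * φ z) (hwne : w ≠ 0) (hz : z ≠ 0)
    (h1 : φ z + z * φ' z ≠ 0)
    (hcurve : 2 * w * dw = (φ z + z * φ' z) * dz) :
    let h : ℂ := (2 * (k : ℂ) * z * φ z - z ^ 2 * φ' z) / (2 * (k : ℂ) + 1)
    w - h / w = z * (φ z + z * φ' z) / ((2 * (k : ℂ) + 1) * w) ∧
    dw / (w - h / w) = ((2 * (k : ℂ) + 1) / (2 * z)) * dz := by
  intro h
  have h2 : (2 * (k : ℂ) + 1) ≠ 0 := by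
    have : ((2 * k + 1 : ℕ) : ℂ) ≠ 0 := Nat.cast_ne_zero.mpr (by omega)
    push_cast at this; exact this
  have hh : h = (2 * (k : ℂ) * z * φ z - z ^ 2 * φ' z) / (2 * (k : ℂ) + 1) := rfl
  have key : w - h / w = z * (φ z + z * φ' z) / ((2 * (k : ℂ) + 1) * w) := by
    rw [hh]
    field_simp [h2]
    linear_combination (2 * (k : ℂ) + 1) * hw
  refine ⟨key, ?_⟩
  rw [key]
  have hden : z * (φ z + z * φ' z) / ((2 * (k : ℂ) + 1) * w) ≠ 0 :=
    div_ne_zero (mul_ne_zero hz h1) (mul_ne_zero h2 hwne)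
  rw [div_eq_iff hden]
  field_simp
  ring_nf
  linear_combination hcurve
end

section
/- Let k ≥ 2 be an integer, c = k/(k-1), and φ(z) = z^{2k} - 2c z^{k-1} - 1. Then φ has only simple roots, and the polynomial (z φ(z))' = φ(z) + z φ'(z) also has only simple roots. -/
/-- For `k ≥ 2`, `c = k/(k-1)` and `φ(z) = z^{2k} - 2c z^{k-1} - 1`, the polynomial `φ`
has only simple roots, and `(zφ)' = φ + zφ'` also has only simple roots. -/
theorem stmt_12 (k : ℕ) (hk : 2 ≤ k) :
    let c : ℂ := (k : ℂ) / ((k : ℂ) - 1)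
    let φ : ℂ → ℂ := fun z => z ^ (2 * k) - 2 * c * z ^ (k - 1) - 1
    (∀ z : ℂ, φ z = 0 → deriv φ z ≠ 0) ∧
    (∀ z : ℂ, φ z + z * deriv φ z = 0 →
      deriv (fun w => φ w + w * deriv φ w) z ≠ 0) := by
  intro c φ
  have hc0 : c = (k : ℂ) / ((k : ℂ) - 1) := rfl
  have hφ0 : φ = fun z => z ^ (2 * k) - 2 * c * z ^ (k - 1) - 1 := rfl
  have hkne : ((k : ℂ) - 1) ≠ 0 := by
    intro h
    have h1 : ((k : ℕ) : ℂ) = ((1 : ℕ) : ℂ) := by push_cast; linear_combination h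
    have := Nat.cast_injective (R := ℂ) h1
    omega
  have hc' : c * ((k : ℂ) - 1) = (k : ℂ) := by rw [hc0]; field_simp
  have ek1 : ((k - 1 : ℕ) : ℂ) = (k : ℂ) - 1 := by
    have := Nat.cast_sub (R := ℂ) (by omega : 1 ≤ k)
    simpa using this
  -- derivative of φ
  have hD : deriv φ = fun z => 2 * (k : ℂ) * z ^ (2 * k - 1) - 2 * (k : ℂ) * z ^ (k - 2) := by
    funext z
    have h : HasDerivAt φ
        (((2 * k : ℕ) : ℂ) * z ^ (2 * k - 1) - 2 * c * (((k - 1 : ℕ) : ℂ) * z ^ (k - 1 - 1))) z := by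
      have h1 := hasDerivAt_pow (2 * k) z
      have h2 := (hasDerivAt_pow (k - 1) z).const_mul (2 * c)
      exact (h1.sub h2).sub_const 1
    rw [h.deriv]
    rw [show k - 1 - 1 = k - 2 by omega, ek1]
    push_cast
    linear_combination (-2 * z ^ (k - 2)) * hc'
  -- closed form for ψ = φ + z φ'
  have hpsi : (fun w => φ w + w * deriv φ w)
      = fun z => (2 * (k : ℂ) + 1) * z ^ (2 * k) - (2 * c + 2 * (k : ℂ)) * z ^ (k - 1) - 1 := by
    funext z
    rw [hD, hφ0]
    have e1 : z * z ^ (2 * k - 1) = z ^ (2 * k) := by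
      rw [← pow_succ']; congr 1; omega
    have e2 : z * z ^ (k - 2) = z ^ (k - 1) := by
      rw [← pow_succ']; congr 1; omega
    simp only
    linear_combination (2 * (k : ℂ)) * e1 - (2 * (k : ℂ)) * e2
  -- derivative of ψ
  have hDpsi : deriv (fun w => φ w + w * deriv φ w)
      = fun z => 2 * (k : ℂ) * (2 * (k : ℂ) + 1) * z ^ (2 * k - 1)
          - 2 * (k : ℂ) ^ 2 * z ^ (k - 2) := by
    rw [hpsi]
    funext z
    have h : HasDerivAt
        (fun z : ℂ => (2 * (k : ℂ) + 1) * z ^ (2 * k) - (2 * c + 2 * (k : ℂ)) * z ^ (k - 1) - 1)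
        ((2 * (k : ℂ) + 1) * (((2 * k : ℕ) : ℂ) * z ^ (2 * k - 1))
          - (2 * c + 2 * (k : ℂ)) * (((k - 1 : ℕ) : ℂ) * z ^ (k - 1 - 1))) z := by
      have h1 := (hasDerivAt_pow (2 * k) z).const_mul (2 * (k : ℂ) + 1)
      have h2 := (hasDerivAt_pow (k - 1) z).const_mul (2 * c + 2 * (k : ℂ))
      exact (h1.sub h2).sub_const 1
    rw [h.deriv]
    rw [show k - 1 - 1 = k - 2 by omega, ek1]
    push_cast
    linear_combination (-2 * z ^ (k - 2)) * hc'
  have hkC : (k : ℂ) ≠ 0 := Nat.cast_ne_zero.mpr (by omega)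
  -- absolute value helpers
  have hAk : ‖((k : ℂ))‖ = (k : ℝ) := Complex.norm_natCast k
  have hA1 : ‖((k : ℂ) + 1)‖ = (k : ℝ) + 1 := by
    rw [show ((k : ℂ) + 1) = ((k + 1 : ℕ) : ℂ) by push_cast; ring, Complex.norm_natCast]
    push_cast; ring
  have hAm : ‖((k : ℂ) - 1)‖ = (k : ℝ) - 1 := by
    rw [show ((k : ℂ) - 1) = ((k - 1 : ℕ) : ℂ) from ek1.symm, Complex.norm_natCast]
    have := Nat.cast_sub (R := ℝ) (by omega : 1 ≤ k)
    simpa using this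
  have hA2 : ‖(2 * (k : ℂ) + 1)‖ = 2 * (k : ℝ) + 1 := by
    rw [show (2 * (k : ℂ) + 1) = ((2 * k + 1 : ℕ) : ℂ) by push_cast; ring, Complex.norm_natCast]
    push_cast; ring
  have hA3 : ‖((k : ℂ) ^ 2 + (k : ℂ))‖ = (k : ℝ) ^ 2 + (k : ℝ) := by
    rw [show ((k : ℂ) ^ 2 + (k : ℂ)) = ((k ^ 2 + k : ℕ) : ℂ) by push_cast; ring,
      Complex.norm_natCast]
    push_cast; ring
  constructor
  · -- part 1
    intro z hz hz'
    rw [hD] at hz'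
    have hz'' : 2 * (k : ℂ) * z ^ (2 * k - 1) - 2 * (k : ℂ) * z ^ (k - 2) = 0 := hz'
    have hzf : z ^ (2 * k) - 2 * c * z ^ (k - 1) - 1 = 0 := hz
    have hz0 : z ≠ 0 := by
      rintro rfl
      rw [zero_pow (by omega : 2 * k ≠ 0), zero_pow (by omega : k - 1 ≠ 0)] at hzf
      simp at hzf
    have hpow : z ^ (2 * k - 1) = z ^ (k - 2) * z ^ (k + 1) := by
      rw [← pow_add]; congr 1; omega
    have h1 : z ^ (k + 1) = 1 := by
      have h2 : 2 * (k : ℂ) * z ^ (k - 2) * (z ^ (k + 1) - 1) = 0 := by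
        rw [hpow] at hz''; linear_combination hz''
      rcases mul_eq_zero.mp h2 with h3 | h3
      · rcases mul_eq_zero.mp h3 with h4 | h4
        · exact absurd h4 (by simpa using hkC)
        · exact absurd h4 (pow_ne_zero _ hz0)
      · exact sub_eq_zero.mp h3
    have h2k : z ^ (2 * k) = z ^ (k - 1) := by
      rw [show 2 * k = (k - 1) + (k + 1) by omega, pow_add, h1, mul_one]
    have key : z ^ (k - 1) * ((k : ℂ) + 1) = -((k : ℂ) - 1) := by
      linear_combination (-(((k : ℂ) - 1))) * hzf + ((k : ℂ) - 1) * h2k + (-2 * z ^ (k - 1)) * hc'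
    have habs1 : ‖z‖ = 1 := by
      have ha : ‖z‖ ^ (k + 1) = 1 := by rw [← norm_pow, h1, norm_one]
      rcases (pow_eq_one_iff_of_ne_zero (by omega : k + 1 ≠ 0)).mp ha with h | h
      · exact h
      · have := norm_nonneg z; rw [h.1] at this; linarith
    have habs2 : ‖z‖ ^ (k - 1) * ((k : ℝ) + 1) = (k : ℝ) - 1 := by
      have h := congrArg (‖·‖) key
      rw [norm_mul, norm_pow, norm_neg, hA1, hAm] at h
      exact h
    rw [habs1, one_pow, one_mul] at habs2
    linarith
  · -- part 2
    intro z hz hz'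
    rw [hDpsi] at hz'
    rw [congrFun hpsi z] at hz
    have hz'' : 2 * (k : ℂ) * (2 * (k : ℂ) + 1) * z ^ (2 * k - 1)
        - 2 * (k : ℂ) ^ 2 * z ^ (k - 2) = 0 := hz'
    have hz0 : z ≠ 0 := by
      rintro rfl
      rw [zero_pow (by omega : 2 * k ≠ 0), zero_pow (by omega : k - 1 ≠ 0)] at hz
      simp at hz
    have hpow : z ^ (2 * k - 1) = z ^ (k - 2) * z ^ (k + 1) := by
      rw [← pow_add]; congr 1; omega
    have h1 : (2 * (k : ℂ) + 1) * z ^ (k + 1) = (k : ℂ) := by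
      have h2 : 2 * (k : ℂ) * z ^ (k - 2) * ((2 * (k : ℂ) + 1) * z ^ (k + 1) - (k : ℂ)) = 0 := by
        rw [hpow] at hz''; linear_combination hz''
      rcases mul_eq_zero.mp h2 with h3 | h3
      · rcases mul_eq_zero.mp h3 with h4 | h4
        · exact absurd h4 (by simpa using hkC)
        · exact absurd h4 (pow_ne_zero _ hz0)
      · exact sub_eq_zero.mp h3
    have h2k : z ^ (2 * k) = z ^ (k - 1) * z ^ (k + 1) := by
      rw [← pow_add]; congr 1; omega
    have key : z ^ (k - 1) * ((k : ℂ) ^ 2 + (k : ℂ)) = -((k : ℂ) - 1) := by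
      linear_combination (-(((k : ℂ) - 1))) * hz + ((k : ℂ) - 1) * z ^ (k - 1) * h1
        + ((k : ℂ) - 1) * (2 * (k : ℂ) + 1) * h2k + (-2 * z ^ (k - 1)) * hc'
    -- pass to absolute values
    have hrpos : 0 < ‖z‖ := norm_pos_iff.mpr hz0
    set r : ℝ := ‖z‖ with hr
    have e1 : (2 * (k : ℝ) + 1) * r ^ (k + 1) = (k : ℝ) := by
      have h := congrArg (‖·‖) h1
      rw [norm_mul, norm_pow, hA2, hAk] at h
      exact h
    have e2 : r ^ (k - 1) * ((k : ℝ) ^ 2 + (k : ℝ)) = (k : ℝ) - 1 := by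
      have h := congrArg (‖·‖) key
      rw [norm_mul, norm_pow, norm_neg, hA3, hAm] at h
      exact h
    have epow : r ^ (k + 1) = r ^ (k - 1) * r ^ 2 := by
      rw [← pow_add]; congr 1; omega
    have hK : (2 : ℝ) ≤ (k : ℝ) := by exact_mod_cast hk
    rw [epow] at e1
    have key3 : (2 * (k : ℝ) + 1) * ((k : ℝ) - 1) * r ^ 2 = (k : ℝ) ^ 3 + (k : ℝ) ^ 2 := by
      linear_combination ((k : ℝ) ^ 2 + k) * e1 - ((2 * (k : ℝ) + 1) * r ^ 2) * e2
    have hr2 : 1 < r ^ 2 := by nlinarith [key3, hK]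
    have hr1 : 1 < r := by nlinarith [hrpos]
    have hrk : 1 ≤ r ^ (k - 1) * r ^ 2 := by
      have := one_le_pow₀ (a := r) hr1.le (n := k + 1)
      rw [epow] at this; exact this
    nlinarith [e1, hrk, hK]
end

section
/- Let m ≥ 1 and k ≥ 1 be integers, and on a neighborhood of 0 in C let G_*(z) = z^m and G(z) = z^{m+k} h(z) with h holomorphic and h(0) ≠ 0. Set h_1(z) = (m+k) h(z) + z h'(z). Then the Hopf differential Q = -G'(z) G_*'(z)/(G(z) - G_*(z))^2 dz^2 satisfies Q = -m z^{k-2} h_1(z)/(z^k h(z) - 1)^2 dz^2, and since h_1(0) = (m+k) h(0) ≠ 0, the order of Q at 0 is exactly k - 2 ≥ -2. -/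
open Topology Filter

/-- Normal form at a regular end with ramification offset `k ≥ 1`: with `G_* = z^m`,
`G = z^{m+k} h(z)` (`h` holomorphic, `h(0) ≠ 0`), and `h₁ = (m+k)h + z h'`, the Hopf
differential `Q = -G'G_*'/(G-G_*)² dz²` equals `-m z^{k-2} h₁/(z^k h - 1)² dz²`, and,
since `h₁(0) = (m+k)h(0) ≠ 0`, the order of `Q` at `0` is exactly `k - 2 ≥ -2`. -/
theorem stmt_13 (m k : ℕ) (hm : 1 ≤ m) (hk : 1 ≤ k) (h : ℂ → ℂ)
    (hh : AnalyticAt ℂ h 0) (h0 : h 0 ≠ 0) :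
    let G : ℂ → ℂ := fun z => z ^ (m + k) * h z
    let Gstar : ℂ → ℂ := fun z => z ^ m
    let h1 : ℂ → ℂ := fun z => ((m : ℂ) + (k : ℂ)) * h z + z * deriv h z
    let Q : ℂ → ℂ := fun z => -(deriv G z * deriv Gstar z) / (G z - Gstar z) ^ 2
    (∀ᶠ z in 𝓝[≠] (0 : ℂ),
      Q z = -(m : ℂ) * z ^ k * h1 z / (z ^ 2 * (z ^ k * h z - 1) ^ 2)) ∧
    h1 0 = ((m : ℂ) + (k : ℂ)) * h 0 ∧
    Tendsto (fun z => z ^ 2 * Q z / z ^ k) (𝓝[≠] (0 : ℂ)) (𝓝 (-(m : ℂ) * h1 0)) ∧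
    -(m : ℂ) * h1 0 ≠ 0 ∧ (-2 : ℤ) ≤ (k : ℤ) - 2 := by
  intro G Gstar h1 Q
  obtain ⟨a, rfl⟩ : ∃ a, m = a + 1 := ⟨m - 1, by omega⟩
  -- continuity of h at 0
  have hcont : ContinuousAt h 0 := hh.continuousAt
  have hk0 : k ≠ 0 := by omega
  -- eventually analytic
  have hev : ∀ᶠ z in 𝓝 (0 : ℂ), AnalyticAt ℂ h z := hh.eventually_analyticAt
  -- eventually z^k * h z - 1 ≠ 0
  have hd : ∀ᶠ z in 𝓝 (0 : ℂ), z ^ k * h z - 1 ≠ 0 := by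
    have hc : ContinuousAt (fun z : ℂ => z ^ k * h z - 1) 0 :=
      (((continuous_pow k).continuousAt).mul hcont).sub continuousAt_const
    have hne : (fun z : ℂ => z ^ k * h z - 1) 0 ≠ 0 := by simp [hk0]
    exact hc.eventually_ne hne
  -- key eventual identity
  have key : ∀ᶠ z in 𝓝[≠] (0 : ℂ),
      Q z = -((a + 1 : ℕ) : ℂ) * z ^ k * h1 z / (z ^ 2 * (z ^ k * h z - 1) ^ 2) := by
    filter_upwards [self_mem_nhdsWithin, nhdsWithin_le_nhds hev,
      nhdsWithin_le_nhds hd] with z hz hza hdz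
    have hz : z ≠ 0 := hz
    have hG : deriv G z = ((a + 1 + k : ℕ) : ℂ) * z ^ (a + k) * h z
        + z ^ (a + 1 + k) * deriv h z := by
      have hd1 : HasDerivAt h (deriv h z) z := hza.differentiableAt.hasDerivAt
      have h2 : HasDerivAt (fun x : ℂ => x ^ (a + 1 + k))
          ((a + 1 + k : ℕ) * z ^ (a + 1 + k - 1)) z := hasDerivAt_pow (a + 1 + k) z
      have h3 := (h2.mul hd1).deriv
      have e : a + 1 + k - 1 = a + k := by omega
      rw [e] at h3
      exact h3
    have hGs : deriv Gstar z = ((a + 1 : ℕ) : ℂ) * z ^ a := by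
      have : deriv Gstar z = ((a + 1 : ℕ) : ℂ) * z ^ (a + 1 - 1) := by
        simp [Gstar, deriv_pow]
      simpa using this
    have hnum : -(deriv G z * deriv Gstar z)
        = -(((a + 1 : ℕ) : ℂ) * z ^ (2 * a) * z ^ k * h1 z) := by
      rw [hG, hGs]
      simp only [h1]
      rw [show a + 1 + k = a + k + 1 by omega, pow_add, pow_add, two_mul, pow_add]
      push_cast
      ring
    have hden2 : (G z - Gstar z) ^ 2 = z ^ (2 * a) * (z ^ 2 * (z ^ k * h z - 1) ^ 2) := by
      have hden : G z - Gstar z = z ^ (a + 1) * (z ^ k * h z - 1) := by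
        simp only [G, Gstar, pow_add]
        ring
      rw [hden, mul_pow, ← pow_mul]
      rw [show (a + 1) * 2 = 2 * a + 2 by omega, pow_add]
      ring
    simp only [Q, hnum, hden2]
    have hzz : (z : ℂ) ^ (2 * a) ≠ 0 := pow_ne_zero _ hz
    rw [show -(((a + 1 : ℕ) : ℂ) * z ^ (2 * a) * z ^ k * h1 z)
        = z ^ (2 * a) * (-((a + 1 : ℕ) : ℂ) * z ^ k * h1 z) by ring,
      mul_div_mul_left _ _ hzz]
  have key' : ∀ᶠ z in 𝓝[≠] (0 : ℂ),
      Q z = -((a + 1 : ℕ) : ℂ) * z ^ k * h1 z / (z ^ 2 * (z ^ k * h z - 1) ^ 2) := key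
  refine ⟨by exact_mod_cast key, by simp [h1], ?_, ?_, by omega⟩
  · -- tendsto
    have hderc : ContinuousAt (deriv h) 0 := by
      have hf : ContinuousAt (fderiv ℂ h) 0 := hh.fderiv.continuousAt
      have happ : Continuous fun g : ℂ →L[ℂ] ℂ => g 1 :=
        (ContinuousLinearMap.apply ℂ ℂ (1 : ℂ)).continuous
      have heq : deriv h = fun z : ℂ => (fderiv ℂ h z) 1 :=
        funext fun z => fderiv_apply_one_eq_deriv.symm
      rw [heq]
      exact happ.continuousAt.comp hf
    have hch1 : ContinuousAt h1 0 :=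
      (continuousAt_const.mul hcont).add (continuous_id.continuousAt.mul hderc)
    have hlim : Tendsto (fun z : ℂ => -(((a + 1 : ℕ)) : ℂ) * h1 z / (z ^ k * h z - 1) ^ 2)
        (𝓝[≠] (0 : ℂ)) (𝓝 (-(((a + 1 : ℕ)) : ℂ) * h1 0)) := by
      have hnum : Tendsto (fun z : ℂ => -(((a + 1 : ℕ)) : ℂ) * h1 z) (𝓝[≠] (0 : ℂ))
          (𝓝 (-(((a + 1 : ℕ)) : ℂ) * h1 0)) :=
        ((continuousAt_const.mul hch1).tendsto).mono_left nhdsWithin_le_nhds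
      have hdenlim : Tendsto (fun z : ℂ => (z ^ k * h z - 1) ^ 2) (𝓝[≠] (0 : ℂ))
          (𝓝 (1 : ℂ)) := by
        have hc : ContinuousAt (fun z : ℂ => (z ^ k * h z - 1) ^ 2) 0 :=
          ((((continuous_pow k).continuousAt).mul hcont).sub continuousAt_const).pow 2
        have h2 := hc.tendsto.mono_left (nhdsWithin_le_nhds (s := {(0 : ℂ)}ᶜ))
        simpa [hk0] using h2
      simpa [Pi.div_def] using hnum.div hdenlim one_ne_zero
    have hlim' : Tendsto (fun z : ℂ => -(((a + 1 : ℕ)) : ℂ) * h1 z / (z ^ k * h z - 1) ^ 2)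
        (𝓝[≠] (0 : ℂ)) (𝓝 (-(((a : ℂ) + 1)) * h1 0)) := by
      convert hlim using 2 <;> push_cast <;> ring
    refine (by exact_mod_cast hlim' : Tendsto _ _ (𝓝 (-(((a + 1 : ℕ)) : ℂ) * h1 0))).congr' ?_
    filter_upwards [key', self_mem_nhdsWithin, nhdsWithin_le_nhds hd] with z hQ hz hdz
    have hz : z ≠ 0 := hz
    rw [hQ]
    field_simp
    push_cast [Int.cast_negSucc]
    ring
  · -- nonzero
    have hmk : ((a + 1 : ℕ) : ℂ) + (k : ℂ) ≠ 0 := by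
      have hne : ((a + 1 + k : ℕ) : ℂ) ≠ 0 := Nat.cast_ne_zero.mpr (by omega)
      push_cast at hne ⊢
      exact_mod_cast hne
    have hm0 : ((a + 1 : ℕ) : ℂ) ≠ 0 := Nat.cast_ne_zero.mpr (by omega)
    simp only [h1]
    push_cast at hmk hm0 ⊢
    simp only [mul_zero, add_zero, CharP.cast_eq_zero, zero_mul]
    intro hc
    have hc2 : ((a : ℂ) + 1) * (((a : ℂ) + 1 + (k : ℂ)) * h 0) = 0 := by
      linear_combination -hc
    rcases mul_eq_zero.mp hc2 with h' | h'
    · exact hm0 h'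
    · rcases mul_eq_zero.mp h' with h'' | h''
      · exact hmk h''
      · exact h0 h''
end

section
/- Let m ≥ 1 and l > m be integers, and on a neighborhood of 0 in C let G_*(z) = z^m and G(z) = z^m + a_l z^l + o(z^l) with a_l ≠ 0 (G holomorphic). Then dG/dG_* = 1 + (l/m) a_l z^{l-m} + o(z^{l-m}), and the Hopf differential Q = -G' G_*'/(G - G_*)^2 dz^2 has order exactly 2(m - l - 1) ≤ -4 at 0; in particular ord_0 Q is even. -/
open Topology Filter Asymptotics



-- factorization lemma
theorem fact_lem (l : ℕ) (h : ℂ → ℂ) (hh : AnalyticAt ℂ h 0)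
    (ho : h =o[𝓝 0] fun z : ℂ => z ^ l) :
    ∃ g : ℂ → ℂ, AnalyticAt ℂ g 0 ∧ ∀ᶠ z in 𝓝 (0:ℂ), h z = z ^ (l+1) * g z := by
  rcases eq_or_ne (analyticOrderAt h 0) ⊤ with htop | hfin
  · refine ⟨0, analyticAt_const, ?_⟩
    filter_upwards [analyticOrderAt_eq_top.mp htop] with z hz
    simp [hz]
  · obtain ⟨n, hn⟩ : ∃ n : ℕ, analyticOrderAt h 0 = n := ⟨(analyticOrderAt h 0).toNat, (ENat.coe_toNat hfin).symm⟩
    obtain ⟨g0, hg0, hg00, hev⟩ := (hh.analyticOrderAt_eq_natCast (n := n)).mp hn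
    have hln : l + 1 ≤ n := by
      by_contra hc
      push_neg at hc
      have hnl : n ≤ l := by omega
      -- g0 tends to 0 along punctured nbhd
      have hq : Tendsto (fun z : ℂ => h z / z ^ l) (𝓝[≠] 0) (𝓝 0) :=
        ho.tendsto_div_nhds_zero.mono_left nhdsWithin_le_nhds
      have hpw : Tendsto (fun z : ℂ => z ^ (l - n)) (𝓝[≠] 0) (𝓝 ((0:ℂ) ^ (l - n))) :=
        ((continuous_pow (l - n)).tendsto 0).mono_left nhdsWithin_le_nhds
      have h0 : Tendsto g0 (𝓝[≠] (0:ℂ)) (𝓝 0) := by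
        have := hq.mul hpw
        rw [zero_mul] at this
        refine this.congr' ?_
        filter_upwards [eventually_mem_nhdsWithin,
          eventually_nhdsWithin_of_eventually_nhds hev] with z hz hz2
        have hz' : (z:ℂ) ≠ 0 := hz
        rw [hz2, smul_eq_mul]
        rw [sub_zero]
        have : z ^ n * g0 z * z ^ (l - n) = g0 z * z ^ l := by
          rw [mul_right_comm, ← pow_add, show n + (l-n) = l from by omega, mul_comm]
        field_simp
        linear_combination this
      have h1 : Tendsto g0 (𝓝[≠] (0:ℂ)) (𝓝 (g0 0)) :=
        hg0.continuousAt.continuousWithinAt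
      exact hg00 (tendsto_nhds_unique h1 h0)
    refine ⟨fun z => z ^ (n - (l+1)) * g0 z, ((analyticAt_id).pow _).mul hg0, ?_⟩
    filter_upwards [hev] with z hz
    rw [hz, smul_eq_mul, sub_zero, ← mul_assoc, ← pow_add,
      show l + 1 + (n - (l+1)) = n from by omega]

/-- Normal form at a regular end with equal ramification numbers: with `G_* = z^m`,
`G = z^m + a_l z^l + o(z^l)` (`G` holomorphic, `a_l ≠ 0`, `l > m ≥ 1`), one has
`dG/dG_* = 1 + (l/m) a_l z^{l-m} + o(z^{l-m})`, and the Hopf differential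
`Q = -G'G_*'/(G-G_*)² dz²` has order exactly `2(m - l - 1) ≤ -4` at `0`;
in particular `ord₀ Q` is even. -/
theorem stmt_14 (m l : ℕ) (hm : 1 ≤ m) (hl : m < l) (a : ℂ) (ha : a ≠ 0)
    (G : ℂ → ℂ) (hG : AnalyticAt ℂ G 0)
    (hexp : (fun z => G z - z ^ m - a * z ^ l) =o[𝓝 0] fun z => z ^ l) :
    let Gstar : ℂ → ℂ := fun z => z ^ m
    let Q : ℂ → ℂ := fun z => -(deriv G z * deriv Gstar z) / (G z - Gstar z) ^ 2
    Tendsto (fun z => (deriv G z / deriv Gstar z - 1) / z ^ (l - m))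
      (𝓝[≠] (0 : ℂ)) (𝓝 (((l : ℂ) / (m : ℂ)) * a)) ∧
    Tendsto (fun z => z ^ (2 * (l + 1 - m)) * Q z)
      (𝓝[≠] (0 : ℂ)) (𝓝 (-(m : ℂ) ^ 2 / a ^ 2)) ∧
    -(m : ℂ) ^ 2 / a ^ 2 ≠ 0 ∧
    2 * ((m : ℤ) - (l : ℤ) - 1) ≤ -4 ∧ Even (2 * ((m : ℤ) - (l : ℤ) - 1)) := by
  obtain ⟨m', rfl⟩ : ∃ m', m = m' + 1 := ⟨m - 1, by omega⟩
  obtain ⟨p, rfl⟩ : ∃ p, l = m' + 1 + (p + 1) := ⟨l - m' - 2, by omega⟩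
  intro Gstar Q
  -- clean away all natural subtractions
  have E1 : m' + 1 - 1 = m' := by omega
  have E2 : m' + 1 + (p + 1) - 1 = m' + (p + 1) := by omega
  have E3 : m' + 1 + (p + 1) - (m' + 1) = p + 1 := by omega
  have E4 : 2 * (m' + 1 + (p + 1) + 1 - (m' + 1)) = 2 * (p + 2) := by omega
  have hmC : ((m' + 1 : ℕ) : ℂ) ≠ 0 := Nat.cast_ne_zero.mpr (by omega)
  set M : ℂ := ((m' + 1 : ℕ) : ℂ) with hM
  set L : ℂ := ((m' + 1 + (p + 1) : ℕ) : ℂ) with hL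
  -- factor: G z = z^m + a z^l + z^(l+1) g z
  have hh : AnalyticAt ℂ (fun z => G z - z ^ (m' + 1) - a * z ^ (m' + 1 + (p + 1))) 0 :=
    (hG.sub ((analyticAt_id).pow _)).sub (analyticAt_const.mul ((analyticAt_id).pow _))
  obtain ⟨g, hg, hfac⟩ := fact_lem _ _ hh hexp
  have hGg : ∀ᶠ z in 𝓝 (0:ℂ), G z
      = z ^ (m' + 1) + a * z ^ (m' + 1 + (p + 1)) + z ^ (m' + 1 + (p + 1) + 1) * g z := by
    filter_upwards [hfac] with z hz
    linear_combination hz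
  obtain ⟨s, hs, hgs⟩ := hg.exists_mem_nhds_analyticOnNhd
  have hg' : AnalyticAt ℂ (deriv g) 0 := hgs.deriv 0 (mem_of_mem_nhds hs)
  -- eventual formula for deriv G
  have hderiv : ∀ᶠ z in 𝓝 (0:ℂ), deriv G z =
      M * z ^ m' + a * (L * z ^ (m' + (p + 1))) +
        ((L + 1) * z ^ (m' + 1 + (p + 1)) * g z + z ^ (m' + 1 + (p + 1) + 1) * deriv g z) := by
    have hGg' : G =ᶠ[𝓝 (0:ℂ)] fun z =>
        z ^ (m' + 1) + a * z ^ (m' + 1 + (p + 1)) + z ^ (m' + 1 + (p + 1) + 1) * g z := hGg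
    filter_upwards [hGg'.deriv, hg.eventually_analyticAt] with z hz hgz
    rw [hz]
    have h1 : HasDerivAt (fun z : ℂ => z ^ (m' + 1)) (M * z ^ m') z := by
      simpa [E1, hM] using hasDerivAt_pow (m' + 1) z
    have h2 : HasDerivAt (fun z : ℂ => a * z ^ (m' + 1 + (p + 1)))
        (a * (L * z ^ (m' + (p + 1)))) z := by
      simpa [E2, hL] using (hasDerivAt_pow (m' + 1 + (p + 1)) z).const_mul a
    have h3 : HasDerivAt (fun z : ℂ => z ^ (m' + 1 + (p + 1) + 1) * g z)
        ((L + 1) * z ^ (m' + 1 + (p + 1)) * g z + z ^ (m' + 1 + (p + 1) + 1) * deriv g z) z := by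
      have := (hasDerivAt_pow (m' + 1 + (p + 1) + 1) z).mul hgz.differentiableAt.hasDerivAt
      simpa [hL, Nat.add_sub_cancel, Nat.cast_add, Nat.cast_one, Pi.mul_def] using this
    exact ((h1.add h2).add h3).deriv
  -- nonvanishing of a + z g z near 0
  have hAco : ContinuousAt (fun z : ℂ => a + z * g z) 0 :=
    continuousAt_const.add (continuousAt_id.mul hg.continuousAt)
  have hA : ∀ᶠ z in 𝓝 (0:ℂ), a + z * g z ≠ 0 :=
    hAco.eventually_ne (by simpa using ha)
  refine ⟨?_, ?_, ?_, ?_, ?_⟩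
  · -- first limit
    have hc : ContinuousAt (fun z : ℂ =>
        (L * a + z * ((L + 1) * g z + z * deriv g z)) / M) 0 :=
      (continuousAt_const.add (continuousAt_id.mul
        ((continuousAt_const.mul hg.continuousAt).add
          (continuousAt_id.mul hg'.continuousAt)))).div continuousAt_const hmC
    have t1 : Tendsto (fun z : ℂ => (L * a + z * ((L + 1) * g z + z * deriv g z)) / M)
        (𝓝 0) (𝓝 (L / M * a)) := by
      convert hc.tendsto using 2
      simp only [zero_mul, add_zero]
      rw [div_mul_eq_mul_div]
    refine (t1.mono_left nhdsWithin_le_nhds).congr' ?_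
    filter_upwards [eventually_mem_nhdsWithin,
      eventually_nhdsWithin_of_eventually_nhds hderiv] with z hz hD
    have hz' : (z : ℂ) ≠ 0 := hz
    simp only [Gstar, deriv_pow_field, hD, E1, E3, ← hM]
    field_simp
    ring
  · -- second limit
    have hc : ContinuousAt (fun z : ℂ =>
        -M * (M + L * a * z ^ (p + 1) + z ^ (p + 2) * ((L + 1) * g z + z * deriv g z))
          / (a + z * g z) ^ 2) 0 := by
      refine ContinuousAt.div ?_ (hAco.pow 2) (pow_ne_zero 2 (by simpa using ha))
      exact continuousAt_const.mul (ContinuousAt.add (continuousAt_const.add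
        (continuousAt_const.mul (continuousAt_id.pow _)))
        ((continuousAt_id.pow _).mul ((continuousAt_const.mul hg.continuousAt).add
          (continuousAt_id.mul hg'.continuousAt))))
    have t2 : Tendsto (fun z : ℂ =>
        -M * (M + L * a * z ^ (p + 1) + z ^ (p + 2) * ((L + 1) * g z + z * deriv g z))
          / (a + z * g z) ^ 2)
        (𝓝 0) (𝓝 (-M ^ 2 / a ^ 2)) := by
      convert hc.tendsto using 2
      simp only [ne_eq, OfNat.ofNat_ne_zero, not_false_eq_true, zero_pow, zero_mul, mul_zero,
        add_zero, Nat.succ_ne_zero]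
      ring
    refine (t2.mono_left nhdsWithin_le_nhds).congr' ?_
    filter_upwards [eventually_mem_nhdsWithin,
      eventually_nhdsWithin_of_eventually_nhds hderiv,
      eventually_nhdsWithin_of_eventually_nhds hGg,
      eventually_nhdsWithin_of_eventually_nhds hA] with z hz hD hGz hAz
    have hz' : (z : ℂ) ≠ 0 := hz
    have hGm : G z - z ^ (m' + 1) = z ^ (m' + 1 + (p + 1)) * (a + z * g z) := by
      rw [hGz, pow_succ]
      ring
    simp only [Q, Gstar, deriv_pow_field, hD, hGm, E1, E4, ← hM]
    field_simp
    ring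
  · exact div_ne_zero (neg_ne_zero.mpr (pow_ne_zero 2 hmC)) (pow_ne_zero 2 ha)
  · omega
  · exact ⟨(↑(m' + 1) : ℤ) - ↑(m' + 1 + (p + 1)) - 1, by ring⟩
end

section
/- Let b ∈ R \ {0, ±1} and define on C \ {0, ±1} the rational functions G(z) = (z^2 + z/b)/(z + b) and G_*(z) = (z^2 - z/b)/(b - z). Then the function ξ = c · √z · (z-1)^{(1-b)/2} (z+1)^{(1+b)/2}/(z+b) satisfies ξ'/ξ = G'/(G - G_*). Moreover, with c = √2, the resulting canonical forms ω = -dG/ξ^2 = -c^{-2}(z^2+2bz+1) z^{-1} (z-1)^{b-1}(z+1)^{-b-1} dz and θ = -(c^2/4)(z^2-2bz+1) z^{-1}(z-1)^{-b-1}(z+1)^{b-1} dz satisfy ω(-z) d(-z) = θ(z) dz, i.e., the pullback of ω under z ↦ -z equals θ. -/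
open Complex Real

lemma neg_cpow_pos {w : ℂ} (hw : 0 < w.im) (a : ℂ) :
    (-w) ^ a = w ^ a * Complex.exp (-(π * I) * a) := by
  have hw0 : w ≠ 0 := fun h => by simp [h] at hw
  have hw0' : -w ≠ 0 := neg_ne_zero.mpr hw0
  have hlog : Complex.log (-w) = Complex.log w + -(π * I) := by
    apply Complex.ext
    · simp [Complex.log_re]
    · simp [Complex.log_im, Complex.arg_neg_eq_arg_sub_pi_of_im_pos hw, sub_eq_add_neg]
  rw [Complex.cpow_def_of_ne_zero hw0', Complex.cpow_def_of_ne_zero hw0, hlog, add_mul,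
    Complex.exp_add]

lemma neg_cpow_neg {w : ℂ} (hw : w.im < 0) (a : ℂ) :
    (-w) ^ a = w ^ a * Complex.exp ((π * I) * a) := by
  have hw0 : w ≠ 0 := fun h => by simp [h] at hw
  have hw0' : -w ≠ 0 := neg_ne_zero.mpr hw0
  have hlog : Complex.log (-w) = Complex.log w + (π * I) := by
    apply Complex.ext
    · simp [Complex.log_re]
    · simp [Complex.log_im, Complex.arg_neg_eq_arg_add_pi_of_im_neg hw]
  rw [Complex.cpow_def_of_ne_zero hw0', Complex.cpow_def_of_ne_zero hw0, hlog, add_mul,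
    Complex.exp_add]


set_option maxHeartbeats 1000000 in
/-- For `b ∈ ℝ \ {0, ±1}` and the three-ended p-front data
`G(z) = (z² + z/b)/(z + b)`, `G_*(z) = (z² - z/b)/(b - z)`:
the function `ξ = c √z (z-1)^{(1-b)/2}(z+1)^{(1+b)/2}/(z+b)` (with `c = √2`) satisfies
`ξ'/ξ = G'/(G - G_*)`; the canonical form is
`ω = -dG/ξ² = -(1/c²)(z² + 2bz + 1) z⁻¹ (z-1)^{b-1}(z+1)^{-b-1} dz`, and with
`θ = -(c²/4)(z² - 2bz + 1) z⁻¹ (z-1)^{-b-1}(z+1)^{b-1} dz` the pullback of `ω` under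
`z ↦ -z` equals `θ` (stated off the real axis, where the principal branches are
unambiguous). -/
theorem stmt_19 (b : ℝ) (hb0 : b ≠ 0) (hb1 : b ≠ 1) (hb2 : b ≠ -1) :
    let bc : ℂ := (b : ℂ)
    let G : ℂ → ℂ := fun z => (z ^ 2 + z / bc) / (z + bc)
    let Gstar : ℂ → ℂ := fun z => (z ^ 2 - z / bc) / (bc - z)
    let ξ : ℂ → ℂ := fun z =>
      ((Real.sqrt 2 : ℝ) : ℂ) * z ^ ((1 : ℂ) / 2) * (z - 1) ^ ((1 - bc) / 2) *
        (z + 1) ^ ((1 + bc) / 2) / (z + bc)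
    let ω : ℂ → ℂ := fun z =>
      -(1 / 2) * (z ^ 2 + 2 * bc * z + 1) * z⁻¹ * (z - 1) ^ (bc - 1) * (z + 1) ^ (-bc - 1)
    let θ : ℂ → ℂ := fun z =>
      -(1 / 2) * (z ^ 2 - 2 * bc * z + 1) * z⁻¹ * (z - 1) ^ (-bc - 1) * (z + 1) ^ (bc - 1)
    ∀ z : ℂ, z.im ≠ 0 →
      deriv ξ z / ξ z = deriv G z / (G z - Gstar z) ∧
      ω z = -deriv G z / (ξ z) ^ 2 ∧
      -ω (-z) = θ z := by
  intro bc G Gstar ξ ω θ z hz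
  have hbc : bc ≠ 0 := Complex.ofReal_ne_zero.mpr hb0
  have hz0 : z ≠ 0 := fun h => hz (by simp [h])
  have him1 : (z - 1).im ≠ 0 := by simpa using hz
  have him2 : (z + 1).im ≠ 0 := by simpa using hz
  have hz1 : z - 1 ≠ 0 := fun h => him1 (by simp [h])
  have hz2 : z + 1 ≠ 0 := fun h => him2 (by simp [h])
  have hzb : z + bc ≠ 0 := by
    intro h
    have := congrArg Complex.im h
    simp [bc] at this
    exact hz this
  have hbz : bc - z ≠ 0 := by
    intro h
    have := congrArg Complex.im h
    simp [bc] at this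
    exact hz this
  have hs0 : z ∈ Complex.slitPlane := Complex.mem_slitPlane_iff.mpr (Or.inr hz)
  have hs1 : z - 1 ∈ Complex.slitPlane := Complex.mem_slitPlane_iff.mpr (Or.inr him1)
  have hs2 : z + 1 ∈ Complex.slitPlane := Complex.mem_slitPlane_iff.mpr (Or.inr him2)
  set C : ℂ := ((Real.sqrt 2 : ℝ) : ℂ) with hCdef
  have hC2 : C * C = 2 := by
    rw [← Complex.ofReal_mul, Real.mul_self_sqrt (by norm_num)]
    norm_num
  have hC : C ≠ 0 := by
    intro h
    rw [h, mul_zero] at hC2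
    norm_num at hC2
  set P1 : ℂ := z ^ ((1 : ℂ) / 2) with hP1def
  set P2 : ℂ := (z - 1) ^ ((1 - bc) / 2) with hP2def
  set P3 : ℂ := (z + 1) ^ ((1 + bc) / 2) with hP3def
  have hP1 : P1 ≠ 0 := by simp [hP1def, Complex.cpow_eq_zero_iff, hz0]
  have hP2 : P2 ≠ 0 := by simp [hP2def, Complex.cpow_eq_zero_iff, hz1]
  have hP3 : P3 ≠ 0 := by simp [hP3def, Complex.cpow_eq_zero_iff, hz2]
  have hP1sq : P1 * P1 = z := by
    rw [hP1def, ← Complex.cpow_add _ _ hz0]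
    norm_num
  have hP2sq : P2 * P2 = (z - 1) ^ (1 - bc) := by
    rw [hP2def, ← Complex.cpow_add _ _ hz1]
    ring_nf
  have hP3sq : P3 * P3 = (z + 1) ^ (1 + bc) := by
    rw [hP3def, ← Complex.cpow_add _ _ hz2]
    ring_nf
  -- derivative of G
  have hG : HasDerivAt G ((z ^ 2 + 2 * bc * z + 1) / ((z + bc) ^ 2)) z := by
    have hnum : HasDerivAt (fun w : ℂ => w ^ 2 + w / bc) (2 * z + 1 / bc) z := by
      have h1 : HasDerivAt (fun w : ℂ => w ^ 2) (2 * z) z := by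
        simpa using hasDerivAt_pow 2 z
      have h2 : HasDerivAt (fun w : ℂ => w / bc) (1 / bc) z := by
        simpa using (hasDerivAt_id z).div_const bc
      exact h1.add h2
    have hden : HasDerivAt (fun w : ℂ => w + bc) 1 z := (hasDerivAt_id z).add_const bc
    have := hnum.div hden hzb
    refine this.congr_deriv ?_
    field_simp
    ring
  -- derivative of ξ
  have hξ : HasDerivAt ξ
      ((C * P1 * P2 * P3 / (z + bc)) *
        ((1 / 2) / z + ((1 - bc) / 2) / (z - 1) + ((1 + bc) / 2) / (z + 1) - 1 / (z + bc))) z := by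
    have h1 : HasDerivAt (fun w : ℂ => w ^ ((1 : ℂ) / 2)) ((1 / 2) * z ^ ((1 : ℂ) / 2 - 1)) z :=
      (Complex.hasStrictDerivAt_cpow_const hs0).hasDerivAt
    have h2 : HasDerivAt (fun w : ℂ => (w - 1) ^ ((1 - bc) / 2))
        (((1 - bc) / 2) * (z - 1) ^ ((1 - bc) / 2 - 1) * 1) z :=
      ((hasDerivAt_id z).sub_const 1).cpow_const hs1
    have h3 : HasDerivAt (fun w : ℂ => (w + 1) ^ ((1 + bc) / 2))
        (((1 + bc) / 2) * (z + 1) ^ ((1 + bc) / 2 - 1) * 1) z :=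
      ((hasDerivAt_id z).add_const 1).cpow_const hs2
    have hden : HasDerivAt (fun w : ℂ => w + bc) 1 z := (hasDerivAt_id z).add_const bc
    have hN := ((h1.const_mul C).mul h2).mul h3
    have := hN.div hden hzb
    have e1 : z ^ ((1 : ℂ) / 2 - 1) = P1 / z := by
      rw [Complex.cpow_sub _ _ hz0, Complex.cpow_one, hP1def]
    have e2 : (z - 1) ^ ((1 - bc) / 2 - 1) = P2 / (z - 1) := by
      rw [Complex.cpow_sub _ _ hz1, Complex.cpow_one, hP2def]
    have e3 : (z + 1) ^ ((1 + bc) / 2 - 1) = P3 / (z + 1) := by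
      rw [Complex.cpow_sub _ _ hz2, Complex.cpow_one, hP3def]
    refine this.congr_deriv ?_
    simp only [Pi.mul_apply]
    rw [e1, e2, e3]
    field_simp
    ring
  have hGG : G z - Gstar z = 2 * z * (1 - z ^ 2) / ((z + bc) * (bc - z)) := by
    show (z ^ 2 + z / bc) / (z + bc) - (z ^ 2 - z / bc) / (bc - z) = _
    field_simp [hbc, hzb, hbz]
    ring
  have h1z2 : (1 : ℂ) - z ^ 2 ≠ 0 := by
    have h := mul_ne_zero hz1 hz2
    intro h'
    apply h
    linear_combination -h'
  have hξz : ξ z = C * P1 * P2 * P3 / (z + bc) := rfl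
  have hξne : ξ z ≠ 0 := by
    rw [hξz]
    exact div_ne_zero (by exact mul_ne_zero (mul_ne_zero (mul_ne_zero hC hP1) hP2) hP3) hzb
  have hωz : ω z = -(1 / 2) * (z ^ 2 + 2 * bc * z + 1) * z⁻¹ * (z - 1) ^ (bc - 1) *
      (z + 1) ^ (-bc - 1) := rfl
  refine ⟨?_, ?_, ?_⟩
  · have hGGne : G z - Gstar z ≠ 0 := by
      rw [hGG]
      exact div_ne_zero (mul_ne_zero (mul_ne_zero two_ne_zero hz0) h1z2) (mul_ne_zero hzb hbz)
    rw [div_eq_div_iff hξne hGGne, hξ.deriv, hG.deriv, hGG, hξz]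
    have hkey : (1 / 2 / z + (1 - bc) / 2 / (z - 1) + (1 + bc) / 2 / (z + 1) - 1 / (z + bc)) *
        (2 * z * (1 - z ^ 2) / ((z + bc) * (bc - z)))
        = (z ^ 2 + 2 * bc * z + 1) / (z + bc) ^ 2 := by
      rw [← mul_div_assoc, div_eq_div_iff (mul_ne_zero hzb hbz) (pow_ne_zero 2 hzb)]
      field_simp [hz0, hz1, hz2, hzb]
      ring
    linear_combination (C * P1 * P2 * P3 / (z + bc)) * hkey
  · rw [hωz, hG.deriv, hξz]
    have hq2 : (z - 1) ^ (bc - 1) = (P2 * P2)⁻¹ := by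
      rw [hP2sq, show bc - 1 = -(1 - bc) by ring, Complex.cpow_neg]
    have hq3 : (z + 1) ^ (-bc - 1) = (P3 * P3)⁻¹ := by
      rw [hP3sq, show -bc - 1 = -(1 + bc) by ring, Complex.cpow_neg]
    rw [hq2, hq3, div_pow, show (C * P1 * P2 * P3) ^ 2
        = C * C * (P1 * P1) * (P2 * P2) * (P3 * P3) by ring, hC2, hP1sq]
    field_simp [hz0, hzb, hP2, hP3]
  · have hωneg : ω (-z) = -(1 / 2) * ((-z) ^ 2 + 2 * bc * (-z) + 1) * (-z)⁻¹ *
        (-z - 1) ^ (bc - 1) * (-z + 1) ^ (-bc - 1) := rfl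
    have hθz : θ z = -(1 / 2) * (z ^ 2 - 2 * bc * z + 1) * z⁻¹ * (z - 1) ^ (-bc - 1) *
        (z + 1) ^ (bc - 1) := rfl
    rw [hωneg, hθz, show (-z - 1 : ℂ) = -(z + 1) by ring, show (-z + 1 : ℂ) = -(z - 1) by ring,
      inv_neg]
    rcases lt_or_gt_of_ne hz with h | h
    · have h1 : (z + 1).im < 0 := by simpa using h
      have h2 : (z - 1).im < 0 := by simpa using h
      rw [neg_cpow_neg h1 (bc - 1), neg_cpow_neg h2 (-bc - 1)]
      have hE : Complex.exp (π * I * (bc - 1)) * Complex.exp (π * I * (-bc - 1)) = 1 := by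
        rw [← Complex.exp_add, show π * I * (bc - 1) + π * I * (-bc - 1) = -(2 * π * I) by ring,
          Complex.exp_neg, Complex.exp_two_pi_mul_I, inv_one]
      linear_combination (-((1 / 2) * (z ^ 2 - 2 * bc * z + 1) * z⁻¹ * (z + 1) ^ (bc - 1) *
        (z - 1) ^ (-bc - 1))) * hE
    · have h1 : 0 < (z + 1).im := by simpa using h
      have h2 : 0 < (z - 1).im := by simpa using h
      rw [neg_cpow_pos h1 (bc - 1), neg_cpow_pos h2 (-bc - 1)]
      have hE : Complex.exp (-(π * I) * (bc - 1)) * Complex.exp (-(π * I) * (-bc - 1)) = 1 := by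
        rw [← Complex.exp_add, show -(π * I) * (bc - 1) + -(π * I) * (-bc - 1) = 2 * π * I by ring,
          Complex.exp_two_pi_mul_I]
      linear_combination (-((1 / 2) * (z ^ 2 - 2 * bc * z + 1) * z⁻¹ * (z + 1) ^ (bc - 1) *
        (z - 1) ^ (-bc - 1))) * hE
end
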